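/- arXiv:2304.03639 — 4 statements merged into one kernel-verified Lean document; each statement's English description precedes it below -/
import Mathlib

section
/- If the linear recurrent network accepts the balanced bracket language (final state zero iff counts equal), then a ≠ 0, b ≠ 0, U ≠ 0, U ≠ -1, b = -U·a, U = 1, and a = -b. -/
/-!
The balanced words `()` and `)(` force `b + U a = 0` and `a + U b = 0`, so `a (1 - U²) = 0`,
while the unbalanced words `(` and `)` force `a ≠ 0` and `b ≠ 0`; hence `U² = 1`. The root
`U = -1` is excluded by the unbalanced word `((`, whose final state is `a (1 + U)`.
-/

/-- Hidden state of a single-cell linear RNN on a bracket sequence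
(`true` = '(' contributing `a`, `false` = ')' contributing `b`),
processed left to right from initial state `0` via `h_t = c_t + U * h_{t-1}`. -/
def hState (a b U : ℝ) (s : List Bool) : ℝ :=
  s.foldl (fun h x => (if x then a else b) + U * h) 0

def AcceptsBalanced (a b U : ℝ) : Prop :=
  ∀ s : List Bool, hState a b U s = 0 ↔ s.count true = s.count false

namespace AcceptsBalanced

variable {a b U : ℝ}

theorem left_ne_zero (h : AcceptsBalanced a b U) : a ≠ 0 := by
  simpa [hState] using h [true]

theorem right_ne_zero (h : AcceptsBalanced a b U) : b ≠ 0 := by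
  simpa [hState] using h [false]

theorem right_add_mul_left (h : AcceptsBalanced a b U) : b + U * a = 0 := by
  simpa [hState] using (h [true, false]).2 rfl

theorem left_add_mul_right (h : AcceptsBalanced a b U) : a + U * b = 0 := by
  simpa [hState] using (h [false, true]).2 rfl

theorem ne_neg_one (h : AcceptsBalanced a b U) : U ≠ -1 := by
  have hstate : a + U * a ≠ 0 := by simpa [hState] using h [true, true]
  rintro rfl
  exact hstate (by ring)

theorem sq_eq_one (h : AcceptsBalanced a b U) : U ^ 2 = 1 := by
  have hprod : a * (1 - U ^ 2) = 0 := by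
    linear_combination h.left_add_mul_right - U * h.right_add_mul_left
  have := (mul_eq_zero.1 hprod).resolve_left h.left_ne_zero
  linarith

theorem eq_one (h : AcceptsBalanced a b U) : U = 1 :=
  (sq_eq_one_iff.1 h.sq_eq_one).resolve_right h.ne_neg_one

end AcceptsBalanced

theorem stmt_2 (a b U : ℝ)
    (hacc : ∀ s : List Bool, hState a b U s = 0 ↔ s.count true = s.count false) :
    a ≠ 0 ∧ b ≠ 0 ∧ U ≠ 0 ∧ U ≠ -1 ∧ b = -U * a ∧ U = 1 ∧ a = -b := by
  have h : AcceptsBalanced a b U := hacc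
  have hU : U = 1 := h.eq_one
  have hba : b + U * a = 0 := h.right_add_mul_left
  refine ⟨h.left_ne_zero, h.right_ne_zero, hU ▸ one_ne_zero, h.ne_neg_one,
    by linear_combination hba, hU, ?_⟩
  subst hU
  linear_combination hba
end

section
/- A linear recurrent network accepts the balanced bracket language if and only if U = 1 and a = -b and a ≠ 0. -/
/-! With `U = 1` the state is `a · #'(' + b · #')'`, so `b = -a ≠ 0` makes it vanish exactly on
balanced counts. Conversely, the inputs `(`, `()`, `)(` and `((` force `a ≠ 0`, `b + U a = 0`,
`a + U b = 0` and `U ≠ -1`; the middle two give `a (U² - 1) = 0`, hence `U = 1` and `b = -a`. -/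

section hState

variable (a b U : ℝ)

@[simp]
theorem hState_nil : hState a b U [] = 0 := rfl

@[simp]
theorem hState_append_singleton (s : List Bool) (x : Bool) :
    hState a b U (s ++ [x]) = (if x then a else b) + U * hState a b U s := by
  simp [hState]

theorem hState_one (s : List Bool) :
    hState a b 1 s = a * s.count true + b * s.count false := by
  induction s using List.reverseRecOn with
  | nil => simp
  | append_singleton s x ih =>
    rw [hState_append_singleton, ih]
    cases x <;> simp [List.count_append] <;> ring

end hState

theorem hState_neg_one_eq_zero_iff {a : ℝ} (ha : a ≠ 0) (s : List Bool) :
    hState a (-a) 1 s = 0 ↔ s.count true = s.count false := by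
  have h : hState a (-a) 1 s = a * ((s.count true : ℝ) - s.count false) := by
    rw [hState_one]; ring
  rw [h, mul_eq_zero, sub_eq_zero, Nat.cast_inj]
  simp [ha]

theorem params_of_hState_eq_zero_iff {a b U : ℝ}
    (H : ∀ s : List Bool, hState a b U s = 0 ↔ s.count true = s.count false) :
    U = 1 ∧ a = -b ∧ a ≠ 0 := by
  have ha : a ≠ 0 := by simpa [hState] using (H [true]).not.mpr (by decide)
  have hUa : b + U * a = 0 := by simpa [hState] using (H [true, false]).mpr rfl
  have hUb : a + U * b = 0 := by simpa [hState] using (H [false, true]).mpr rfl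
  have hU_ne : a + U * a ≠ 0 := by simpa [hState] using (H [true, true]).not.mpr (by decide)
  have hU_sq : a * (U - 1) * (U + 1) = 0 := by linear_combination U * hUa - hUb
  have hU : U = 1 := by
    have hU' : U + 1 ≠ 0 := fun h => hU_ne (by linear_combination a * h)
    simpa [ha, hU', sub_eq_zero] using hU_sq
  subst hU
  exact ⟨rfl, by linarith, ha⟩

theorem stmt_3 (a b U : ℝ) :
    (∀ s : List Bool, hState a b U s = 0 ↔ s.count true = s.count false) ↔
      U = 1 ∧ a = -b ∧ a ≠ 0 := by
  refine ⟨params_of_hState_eq_zero_iff, ?_⟩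
  rintro ⟨rfl, rfl, ha⟩
  simpa using hState_neg_one_eq_zero_iff ha
end

section
/- Suppose a ≠ 0, b ≠ 0, b = -U·a, U ≠ -1, and both b + U·b + U²·a + U³·a = 0 and b + U·a + U²·b + U³·a = 0. Then U = 1 and a = -b. -/
theorem eq_one_of_mul_mul_sq_sub_one_eq_zero {R : Type*} [Ring R] [NoZeroDivisors R]
    {U a : R} (hU0 : U ≠ 0) (hU : U ≠ -1) (ha : a ≠ 0) (h : U * a * (U ^ 2 - 1) = 0) :
    U = 1 := by
  have hsq : U ^ 2 = 1 := by
    simpa [hU0, ha, sub_eq_zero] using h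
  exact (sq_eq_one_iff.mp hsq).resolve_right hU

theorem stmt_7_general (a b U : ℝ) (ha : a ≠ 0) (hb : b ≠ 0) (hba : b = -U * a) (hU : U ≠ -1)
    (h5 : b + U * b + U ^ 2 * a + U ^ 3 * a = 0) :
    U = 1 ∧ a = -b := by
  subst hba
  have hU0 : U ≠ 0 := by
    rintro rfl
    simp at hb
  have hU1 : U = 1 :=
    eq_one_of_mul_mul_sq_sub_one_eq_zero hU0 hU ha (by linear_combination h5)
  exact ⟨hU1, by rw [hU1]; ring⟩

theorem stmt_7 (a b U : ℝ) (ha : a ≠ 0) (hb : b ≠ 0) (hba : b = -U * a) (hU : U ≠ -1)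
    (h5 : b + U * b + U ^ 2 * a + U ^ 3 * a = 0)
    (h6 : b + U * a + U ^ 2 * b + U ^ 3 * a = 0) :
    U = 1 ∧ a = -b :=
  stmt_7_general a b U ha hb hba hU h5
end

section
/- If U ≠ 1, then there exist two bracket sequences, both in BB, such that the final hidden states of the linear recurrent network on them differ, and hence they cannot both be zero unless a = b; consequently if additionally b = -U·a and a ≠ 0 and U ≠ -1, the network cannot accept BB. -/
lemma hState_open_close_sub_hState_close_open (a b U : ℝ) :
    hState a b U [true, false] - hState a b U [false, true] = (b - a) * (1 - U) := by
  simp only [hState, List.foldl_cons, List.foldl_nil, if_true, Bool.false_eq_true, if_false]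
  ring

lemma hState_open_close_ne_hState_close_open {a b U : ℝ} (hab : a ≠ b) (hU : U ≠ 1) :
    hState a b U [true, false] ≠ hState a b U [false, true] := by
  rw [← sub_ne_zero, hState_open_close_sub_hState_close_open]
  exact mul_ne_zero (sub_ne_zero.mpr hab.symm) (sub_ne_zero.mpr hU.symm)

lemma ne_neg_mul_self {a U : ℝ} (ha : a ≠ 0) (hU : U ≠ -1) : a ≠ -U * a := by
  intro h
  have hU' : 1 + U ≠ 0 := fun h' => hU (by linarith)
  exact mul_ne_zero ha hU' (by linear_combination h)

theorem stmt_12 (a b U : ℝ) (hU : U ≠ 1) :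
    (a ≠ b → ∃ s t : List Bool,
        s.count true = s.count false ∧ t.count true = t.count false ∧
        hState a b U s ≠ hState a b U t) ∧
    (b = -U * a → a ≠ 0 → U ≠ -1 →
      ¬ (∀ s : List Bool, hState a b U s = 0 ↔ s.count true = s.count false)) := by
  refine ⟨fun hab => ⟨_, _, rfl, rfl, hState_open_close_ne_hState_close_open hab hU⟩, ?_⟩
  rintro rfl ha hU' accepts
  have hab : a ≠ -U * a := ne_neg_mul_self ha hU'
  exact hState_open_close_ne_hState_close_open hab hU
    (((accepts _).mpr rfl).trans ((accepts _).mpr rfl).symm)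
end
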